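/- Under the assumptions that K is a kernel of order ℓ = ⌊β⌋ with ∫|z|^β|K(z)|dz = C_β(K) < ∞ and ‖K‖₂ < ∞, and f ∈ Σ(β,L) is a bounded density, there exists a constant c > 0 depending only on β, L, ‖K‖₂ and C_β(K) such that for all x, E(|f̂_{n,h}(x) − f(x)|²) ≤ (c/n²)( |Σ_{k=1}^n h_k^β/ℓ!|² + Σ_{k=1}^n 1/h_k ). -/

import Mathlib

/-!
Bias–variance decomposition. The summands `Y_k = h_k⁻¹ K((X_k - x)/h_k)` are independent, so the
variance of their average is `n⁻² ∑ Var Y_k`, and `E Y_k² ≤ sup f · ‖K‖₂² / h_k` because the density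
of `X_k` is bounded. The mean of `Y_k` is `∫ K(z) f(x + h_k z) dz`. Replacing `f(x + h_k z)` by its
Taylor polynomial of order `ℓ` at `x` costs at most `L |h_k z|^β` by the Hölder condition on
`f^(ℓ)`, while the polynomial itself contributes exactly `f x`, since `K` integrates to one and has
vanishing moments of orders `1, …, ℓ`. Hence the bias of `Y_k` is at most `L C_β(K) h_k^β`.
-/

open MeasureTheory Real ProbabilityTheory Finset Set
open scoped Nat

theorem abs_sub_taylorWithinEval_le_of_holder {f : ℝ → ℝ} {x A γ : ℝ} (hγ : 0 ≤ γ) {m : ℕ}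
    (hf : ContDiff ℝ m f)
    (hH : ∀ y, |iteratedDeriv m f y - iteratedDeriv m f x| ≤ A * |y - x| ^ γ) (y : ℝ) :
    |f y - taylorWithinEval f m univ x y| ≤ A * |y - x| ^ (γ + m) := by
  induction m generalizing f y with
  | zero => simpa [taylor_within_zero_eval] using hH y
  | succ m ih =>
    -- The remainder of order `m + 1` of `f` vanishes at `x` and its derivative is the remainder
    -- of order `m` of `f'`, so the mean value inequality gains one factor `|y - x|`.
    have hA : 0 ≤ A := by simpa using (abs_nonneg _).trans (hH (x + 1))
    obtain ⟨hdiff, -, hf'⟩ := (contDiff_succ_iff_deriv (n := m)).mp (by exact_mod_cast hf)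
    have hR (t : ℝ) : HasDerivAt (fun y => f y - taylorWithinEval f (m + 1) univ x y)
        (deriv f t - taylorWithinEval (deriv f) m univ x t) t := by
      have := hasDerivAt_taylorWithinEval_succ (x₀ := x) (x := t) (s := univ) f m
      rw [derivWithin_univ] at this
      exact (hdiff t).hasDerivAt.sub this
    have hR' (t : ℝ) (ht : t ∈ uIcc x y) :
        ‖deriv f t - taylorWithinEval (deriv f) m univ x t‖ ≤ A * |y - x| ^ (γ + m) :=
      (ih hf' (by simpa [← iteratedDeriv_succ'] using hH) t).trans <|
        mul_le_mul_of_nonneg_left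
          (rpow_le_rpow (abs_nonneg _) (abs_sub_left_of_mem_uIcc ht) (by positivity)) hA
    have := (convex_uIcc x y).norm_image_sub_le_of_norm_hasDerivWithin_le
      (fun t _ => (hR t).hasDerivWithinAt) hR' left_mem_uIcc right_mem_uIcc
    rw [taylorWithinEval_self, sub_self, sub_zero, norm_eq_abs, norm_eq_abs] at this
    rw [Nat.cast_succ, ← add_assoc, rpow_add_one' (abs_nonneg _) (by positivity), ← mul_assoc]
    exact this

section Density

variable {α : Type*} [MeasurableSpace α] {μ : Measure α} {f : α → ℝ}

theorem integral_withDensity_ofReal (hf : Measurable f) (hf0 : ∀ y, 0 ≤ f y) (g : α → ℝ) :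
    ∫ y, g y ∂μ.withDensity (fun y => ENNReal.ofReal (f y)) = ∫ y, f y * g y ∂μ := by
  rw [integral_withDensity_eq_integral_toReal_smul hf.ennreal_ofReal
    (.of_forall fun _ => ENNReal.ofReal_lt_top)]
  simp [ENNReal.toReal_ofReal (hf0 _)]

theorem withDensity_ofReal_le_smul {M : ℝ} (hfM : ∀ y, f y ≤ M) :
    μ.withDensity (fun y => ENNReal.ofReal (f y)) ≤ ENNReal.ofReal M • μ := by
  rw [← withDensity_const]
  exact withDensity_mono (.of_forall fun y => ENNReal.ofReal_le_ofReal (hfM y))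

theorem integral_withDensity_ofReal_le {M : ℝ} (hM : 0 ≤ M) (hfM : ∀ y, f y ≤ M) {g : α → ℝ}
    (hg0 : ∀ y, 0 ≤ g y) (hg : Integrable g μ) :
    ∫ y, g y ∂μ.withDensity (fun y => ENNReal.ofReal (f y)) ≤ M * ∫ y, g y ∂μ := by
  calc ∫ y, g y ∂μ.withDensity (fun y => ENNReal.ofReal (f y))
      ≤ ∫ y, g y ∂(ENNReal.ofReal M • μ) :=
        integral_mono_measure (withDensity_ofReal_le_smul hfM) (.of_forall hg0)
          (hg.smul_measure ENNReal.ofReal_ne_top)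
    _ = M * ∫ y, g y ∂μ := by rw [integral_smul_measure, ENNReal.toReal_ofReal hM, smul_eq_mul]

end Density

section MeanSquareError

variable {Ω : Type*} [MeasurableSpace Ω] {P : Measure Ω} [IsProbabilityMeasure P]

theorem integral_sq_sub_eq_variance_add {Z : Ω → ℝ} (hZ : MemLp Z 2 P) (a : ℝ) :
    ∫ ω, (Z ω - a) ^ 2 ∂P = Var[Z; P] + (P[Z] - a) ^ 2 := by
  have h := variance_eq_sub (μ := P) (X := fun ω => Z ω - a) (hZ.sub (memLp_const a))
  rw [variance_sub_const hZ.1] at h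
  rw [h, integral_sub (hZ.integrable one_le_two) (integrable_const a)]
  simp

theorem integral_sq_average_sub_le {ι : Type*} [Fintype ι] [Nonempty ι] {Y : ι → Ω → ℝ}
    (hY : ∀ k, MemLp (Y k) 2 P) (hind : Pairwise fun i j => Y i ⟂ᵢ[P] Y j) (a : ℝ)
    {b v : ι → ℝ} (hb : ∀ k, |P[Y k] - a| ≤ b k) (hv : ∀ k, P[Y k ^ 2] ≤ v k) :
    ∫ ω, (1 / (Fintype.card ι : ℝ) * ∑ k, Y k ω - a) ^ 2 ∂P
      ≤ ((∑ k, b k) ^ 2 + ∑ k, v k) / (Fintype.card ι : ℝ) ^ 2 := by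
  set N : ℝ := (Fintype.card ι : ℝ)
  have hN : N ≠ 0 := Nat.cast_ne_zero.2 Fintype.card_ne_zero
  have hsum : MemLp (∑ k, Y k) 2 P := memLp_finsetSum' _ fun k _ => hY k
  have hvar : Var[fun ω => 1 / N * (∑ k, Y k) ω; P] ≤ (1 / N) ^ 2 * ∑ k, v k := by
    rw [variance_const_mul, IndepFun.variance_sum (fun k _ => hY k)
      fun i _ j _ hij => hind hij]
    gcongr with k
    exact (variance_le_expectation_sq (hY k).1).trans (hv k)
  have hmean : |P[fun ω => 1 / N * (∑ k, Y k) ω] - a| ≤ 1 / N * ∑ k, b k := by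
    have hE : P[fun ω => 1 / N * (∑ k, Y k) ω] - a = 1 / N * ∑ k, (P[Y k] - a) := by
      simp only [Finset.sum_apply]
      rw [integral_const_mul, integral_finsetSum _ fun k _ => (hY k).integrable one_le_two,
        sum_sub_distrib, sum_const, card_univ, nsmul_eq_mul, mul_sub, ← mul_assoc,
        one_div_mul_cancel hN, one_mul]
    rw [hE, abs_mul, abs_of_nonneg (by positivity)]
    gcongr
    exact (abs_sum_le_sum_abs _ _).trans (sum_le_sum fun k _ => hb k)
  have hbias := pow_le_pow_left₀ (abs_nonneg _) hmean 2
  rw [sq_abs] at hbias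
  simp only [← Finset.sum_apply]
  rw [integral_sq_sub_eq_variance_add (hsum.const_mul _)]
  calc _ ≤ (1 / N) ^ 2 * ∑ k, v k + (1 / N * ∑ k, b k) ^ 2 := add_le_add hvar hbias
    _ = _ := by field_simp; ring

end MeanSquareError

section Kernel

variable {K : ℝ → ℝ}

theorem integrable_pow_mul_of_integrable_abs (hK : AEStronglyMeasurable K) {i : ℕ}
    (hi : Integrable (fun z => |z| ^ i * |K z|)) : Integrable (fun z => z ^ i * K z) :=
  hi.mono' ((continuous_pow i).aestronglyMeasurable.mul hK) <|
    .of_forall fun z => by rw [norm_eq_abs, abs_mul, abs_pow]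

theorem integral_mul_sum_pow_eq_of_moments {ℓ : ℕ} (hK : AEStronglyMeasurable K)
    (hK1 : ∫ z, K z = 1)
    (hKmom_int : ∀ i ≤ ℓ, Integrable (fun z => |z| ^ i * |K z|))
    (hKmom : ∀ i, 1 ≤ i → i ≤ ℓ → ∫ z, z ^ i * K z = 0) (a : ℕ → ℝ) :
    Integrable (fun z => K z * ∑ i ∈ range (ℓ + 1), a i * z ^ i) ∧
      ∫ z, K z * ∑ i ∈ range (ℓ + 1), a i * z ^ i = a 0 := by
  have hint (i) (hi : i ∈ range (ℓ + 1)) : Integrable (fun z => a i * (z ^ i * K z)) :=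
    (integrable_pow_mul_of_integrable_abs hK
      (hKmom_int i (Nat.lt_succ_iff.mp (mem_range.mp hi)))).const_mul _
  have heq : (fun z => K z * ∑ i ∈ range (ℓ + 1), a i * z ^ i)
      = fun z => ∑ i ∈ range (ℓ + 1), a i * (z ^ i * K z) := by
    ext z; rw [mul_sum]; exact sum_congr rfl fun i _ => by ring
  rw [heq]
  refine ⟨integrable_finsetSum _ hint, ?_⟩
  rw [integral_finsetSum _ hint, sum_range_succ']
  simp only [integral_const_mul]
  rw [sum_eq_zero fun i hi => by
    rw [hKmom (i + 1) (by omega) (by simp at hi; omega), mul_zero]]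
  simp [hK1]

theorem abs_integral_mul_comp_sub_le_of_holder {f : ℝ → ℝ} {β L : ℝ} {ℓ : ℕ} (hℓβ : (ℓ : ℝ) ≤ β)
    (hf : ContDiff ℝ ℓ f)
    (hf_holder : ∀ x y, |iteratedDeriv ℓ f y - iteratedDeriv ℓ f x| ≤ L * |y - x| ^ (β - ℓ))
    (hK : AEStronglyMeasurable K) (hK1 : ∫ z, K z = 1)
    (hKmom_int : ∀ i ≤ ℓ, Integrable (fun z => |z| ^ i * |K z|))
    (hKmom : ∀ i, 1 ≤ i → i ≤ ℓ → ∫ z, z ^ i * K z = 0)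
    (hKβ : Integrable (fun z => |z| ^ β * |K z|)) (x : ℝ) {h : ℝ} (hh : 0 ≤ h) :
    Integrable (fun z => K z * f (x + h * z)) ∧
      |(∫ z, K z * f (x + h * z)) - f x| ≤ L * (∫ z, |z| ^ β * |K z|) * h ^ β := by
  set a : ℕ → ℝ := fun i => (i ! : ℝ)⁻¹ * h ^ i * iteratedDeriv i f x
  set T : ℝ → ℝ := fun z => ∑ i ∈ range (ℓ + 1), a i * z ^ i
  have hT (z : ℝ) : taylorWithinEval f ℓ univ x (x + h * z) = T z := by
    simp only [taylor_within_apply, iteratedDerivWithin_univ, smul_eq_mul, T, a]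
    exact sum_congr rfl fun i _ => by ring
  obtain ⟨hTint, hTeq⟩ := integral_mul_sum_pow_eq_of_moments hK hK1 hKmom_int hKmom a
  have hR (z : ℝ) : ‖K z * (f (x + h * z) - T z)‖ ≤ L * h ^ β * (|z| ^ β * |K z|) := by
    have := abs_sub_taylorWithinEval_le_of_holder (sub_nonneg.mpr hℓβ) hf
      (hf_holder x) (x + h * z)
    rw [hT, sub_add_cancel, add_sub_cancel_left, abs_mul, abs_of_nonneg hh,
      mul_rpow hh (abs_nonneg z)] at this
    rw [norm_eq_abs, abs_mul]
    calc |K z| * |f (x + h * z) - T z| ≤ |K z| * (L * (h ^ β * |z| ^ β)) := by gcongr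
      _ = L * h ^ β * (|z| ^ β * |K z|) := by ring
  have hRint : Integrable (fun z => K z * (f (x + h * z) - T z)) :=
    (hKβ.const_mul _).mono' (hK.mul (by fun_prop : Continuous fun z =>
      f (x + h * z) - T z).aestronglyMeasurable) (.of_forall hR)
  have hsplit : (fun z => K z * T z + K z * (f (x + h * z) - T z))
      =ᵐ[volume] fun z => K z * f (x + h * z) := .of_forall fun z => by ring
  refine ⟨(hTint.add hRint).congr hsplit, ?_⟩
  calc |(∫ z, K z * f (x + h * z)) - f x| = ‖∫ z, K z * (f (x + h * z) - T z)‖ := by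
        rw [← integral_congr_ae hsplit, integral_add hTint hRint, hTeq]
        simp [a, norm_eq_abs]
    _ ≤ ∫ z, L * h ^ β * (|z| ^ β * |K z|) :=
        norm_integral_le_of_norm_le (hKβ.const_mul _) (.of_forall hR)
    _ = L * (∫ z, |z| ^ β * |K z|) * h ^ β := by rw [integral_const_mul]; ring

noncomputable def scaledKernel (K : ℝ → ℝ) (h x y : ℝ) : ℝ := 1 / h * K ((y - x) / h)

theorem integral_mul_scaledKernel (g : ℝ → ℝ) (x : ℝ) {h : ℝ} (hh : 0 < h) :
    ∫ y, g y * scaledKernel K h x y = ∫ z, K z * g (x + h * z) := by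
  have hsub : ∫ z, g (x + h * z) * scaledKernel K h x (x + h * z)
      = h⁻¹ * ∫ y, g y * scaledKernel K h x y := by
    rw [Measure.integral_comp_mul_left (fun t => g (x + t) * scaledKernel K h x (x + t)),
      integral_add_left_eq_self (fun y => g y * scaledKernel K h x y), abs_of_pos (inv_pos.2 hh),
      smul_eq_mul]
  have hcancel (z : ℝ) :
      g (x + h * z) * scaledKernel K h x (x + h * z) = h⁻¹ * (K z * g (x + h * z)) := by
    rw [scaledKernel, add_sub_cancel_left, mul_div_cancel_left₀ _ hh.ne']
    ring
  simp_rw [hcancel, integral_const_mul] at hsub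
  exact (mul_left_cancel₀ (inv_ne_zero hh.ne') hsub).symm

theorem integral_scaledKernel_sq (x : ℝ) {h : ℝ} (hh : 0 < h) :
    ∫ y, scaledKernel K h x y ^ 2 = (∫ z, K z ^ 2) / h := by
  simp_rw [sq, integral_mul_scaledKernel _ x hh, scaledKernel, add_sub_cancel_left,
    mul_div_cancel_left₀ _ hh.ne']
  rw [← integral_div]
  congr 1 with z
  ring

theorem aestronglyMeasurable_scaledKernel (hK : AEStronglyMeasurable K) (x : ℝ) {h : ℝ}
    (hh : h ≠ 0) : AEStronglyMeasurable (scaledKernel K h x) := by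
  have hq : Measure.QuasiMeasurePreserving (fun y : ℝ => (y - x) / h) := by
    simpa [Function.comp_def, div_eq_inv_mul, smul_eq_mul] using
      (Measure.quasiMeasurePreserving_smul volume (inv_ne_zero hh)).comp
        (measurePreserving_sub_right volume x).quasiMeasurePreserving
  exact (hK.comp_quasiMeasurePreserving hq).const_mul _

theorem memLp_two_scaledKernel (hK2 : MemLp K 2) (x : ℝ) {h : ℝ} (hh : h ≠ 0) :
    MemLp (scaledKernel K h x) 2 := by
  rw [memLp_two_iff_integrable_sq (aestronglyMeasurable_scaledKernel hK2.1 x hh)]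
  refine (((hK2.integrable_sq.comp_div hh).comp_sub_right x).const_mul ((1 / h) ^ 2)).congr
    (.of_forall fun y => ?_)
  simp only [scaledKernel]
  ring

section Observation

variable {Ω : Type*} [MeasurableSpace Ω] {P : Measure Ω} {X : Ω → ℝ} {f : ℝ → ℝ}

theorem aestronglyMeasurable_scaledKernel_map (hK : AEStronglyMeasurable K)
    (hXf : P.map X = volume.withDensity fun y => ENNReal.ofReal (f y)) (x : ℝ) {h : ℝ}
    (hh : h ≠ 0) : AEStronglyMeasurable (scaledKernel K h x) (P.map X) := by
  rw [hXf]
  exact (aestronglyMeasurable_scaledKernel hK x hh).mono_ac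
    (withDensity_absolutelyContinuous _ _)

theorem memLp_scaledKernel_comp (hX : Measurable X)
    (hXf : P.map X = volume.withDensity fun y => ENNReal.ofReal (f y)) {M : ℝ}
    (hfM : ∀ y, f y ≤ M) (hK2 : MemLp K 2) (x : ℝ) {h : ℝ} (hh : h ≠ 0) :
    MemLp (scaledKernel K h x ∘ X) 2 P := by
  refine (memLp_map_measure_iff (aestronglyMeasurable_scaledKernel_map hK2.1 hXf x hh)
    hX.aemeasurable).1 ?_
  rw [hXf]
  exact (memLp_two_scaledKernel hK2 x hh).of_measure_le_smul ENNReal.ofReal_ne_top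
    (withDensity_ofReal_le_smul hfM)

theorem integral_scaledKernel_comp (hX : Measurable X)
    (hXf : P.map X = volume.withDensity fun y => ENNReal.ofReal (f y)) (hf : Measurable f)
    (hf0 : ∀ y, 0 ≤ f y) (hK : AEStronglyMeasurable K) (x : ℝ) {h : ℝ} (hh : 0 < h) :
    P[scaledKernel K h x ∘ X] = ∫ z, K z * f (x + h * z) := by
  calc P[scaledKernel K h x ∘ X] = ∫ y, scaledKernel K h x y ∂(P.map X) :=
        (integral_map hX.aemeasurable
          (aestronglyMeasurable_scaledKernel_map hK hXf x hh.ne')).symm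
    _ = _ := by rw [hXf, integral_withDensity_ofReal hf hf0, integral_mul_scaledKernel _ x hh]

theorem integral_scaledKernel_comp_sq_le (hX : Measurable X)
    (hXf : P.map X = volume.withDensity fun y => ENNReal.ofReal (f y)) {M : ℝ} (hM : 0 ≤ M)
    (hfM : ∀ y, f y ≤ M) (hK2 : MemLp K 2) (x : ℝ) {h : ℝ} (hh : 0 < h) :
    P[(scaledKernel K h x ∘ X) ^ 2] ≤ M * (∫ z, K z ^ 2) / h := by
  calc P[(scaledKernel K h x ∘ X) ^ 2] = ∫ y, scaledKernel K h x y ^ 2 ∂(P.map X) :=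
        (integral_map hX.aemeasurable
          ((aestronglyMeasurable_scaledKernel_map hK2.1 hXf x hh.ne').pow 2)).symm
    _ ≤ M * (∫ z, K z ^ 2) / h := by
        rw [hXf, mul_div_assoc, ← integral_scaledKernel_sq x hh]
        exact integral_withDensity_ofReal_le hM hfM (fun y => sq_nonneg _)
          (memLp_two_scaledKernel hK2 x hh.ne').integrable_sq

end Observation

end Kernel

theorem sq_mul_add_mul_le {A B S T : ℝ} (hB : 0 ≤ B) (hT : 0 ≤ T) :
    (A * S) ^ 2 + B * T ≤ (A ^ 2 + B + 1) * (S ^ 2 + T) := by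
  nlinarith [mul_nonneg hB (sq_nonneg S), sq_nonneg S, mul_nonneg (sq_nonneg A) hT]

theorem stmt_2_general
    (β L : ℝ) (hβ : 0 < β)
    (ℓ : ℕ) (hℓ : ℓ = ⌊β⌋₊)
    (f : ℝ → ℝ) (hf_smooth : ContDiff ℝ ℓ f)
    (hf_holder : ∀ x y : ℝ,
      |iteratedDeriv ℓ f y - iteratedDeriv ℓ f x| ≤ L * |y - x| ^ (β - ℓ))
    (hf0 : ∀ y, 0 ≤ f y)
    (hfbdd : ∃ M, ∀ y, f y ≤ M)
    (K : ℝ → ℝ) (hK1 : ∫ z, K z = 1)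
    (hK2 : MemLp K 2 volume)
    (hKmom_int : ∀ i : ℕ, i ≤ ℓ → Integrable (fun z => |z| ^ i * |K z|))
    (hKmom : ∀ i : ℕ, 1 ≤ i → i ≤ ℓ → ∫ z, z ^ i * K z = 0)
    (hKβ : Integrable (fun z => |z| ^ β * |K z|)) :
    ∃ c > 0, ∀ (n : ℕ), 0 < n → ∀ (h : Fin n → ℝ), (∀ k, 0 < h k) →
      (∀ k l : Fin n, k < l → h l < h k) →
      ∀ (Ω : Type) (_ : MeasurableSpace Ω) (P : Measure Ω),
        IsProbabilityMeasure P →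
        ∀ (X : Fin n → Ω → ℝ), (∀ k, Measurable (X k)) →
          iIndepFun X P →
          (∀ k, Measure.map (X k) P
            = volume.withDensity (fun y => ENNReal.ofReal (f y))) →
          ∀ x : ℝ,
            (∫ ω, ((1 / (n : ℝ)) * ∑ k, (1 / h k) * K ((X k ω - x) / h k)
                - f x) ^ 2 ∂P)
              ≤ c / (n : ℝ) ^ 2
                  * ((∑ k, h k ^ β / (Nat.factorial ℓ : ℝ)) ^ 2
                      + ∑ k, 1 / h k) := by
  obtain ⟨M, hfM⟩ := hfbdd
  have hM : 0 ≤ M := (hf0 0).trans (hfM 0)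
  have hℓβ : (ℓ : ℝ) ≤ β := hℓ ▸ Nat.floor_le hβ.le
  have hfm : Measurable f := hf_smooth.continuous.measurable
  set Cβ := ∫ z, |z| ^ β * |K z|
  set I2 := ∫ z, K z ^ 2
  have hI2 : 0 ≤ I2 := integral_nonneg fun z => sq_nonneg _
  refine ⟨(L * Cβ * ℓ !) ^ 2 + M * I2 + 1, by positivity, ?_⟩
  intro n hn h hh _ Ω _ P hP X hXm hXind hXmap x
  have : Nonempty (Fin n) := ⟨⟨0, hn⟩⟩
  have hind : Pairwise fun i j =>
      (scaledKernel K (h i) x ∘ X i) ⟂ᵢ[P] (scaledKernel K (h j) x ∘ X j) := fun i j hij =>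
    (hXind.comp₀ _ (fun k => (hXm k).aemeasurable) fun k =>
      (aestronglyMeasurable_scaledKernel_map hK2.1 (hXmap k) x (hh k).ne').aemeasurable).indepFun hij
  have hbias k : |P[scaledKernel K (h k) x ∘ X k] - f x| ≤ L * Cβ * h k ^ β := by
    rw [integral_scaledKernel_comp (hXm k) (hXmap k) hfm hf0 hK2.1 x (hh k)]
    exact (abs_integral_mul_comp_sub_le_of_holder hℓβ hf_smooth hf_holder hK2.1 hK1 hKmom_int
      hKmom hKβ x (hh k).le).2
  have hmse := integral_sq_average_sub_le
    (fun k => memLp_scaledKernel_comp (hXm k) (hXmap k) hfM hK2 x (hh k).ne') hind (f x) hbias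
    fun k => integral_scaledKernel_comp_sq_le (hXm k) (hXmap k) hM hfM hK2 x (hh k)
  rw [Fintype.card_fin] at hmse
  refine hmse.trans ?_
  have hS : ∑ k, L * Cβ * h k ^ β = L * Cβ * ℓ ! * ∑ k, h k ^ β / ℓ ! := by
    rw [mul_sum]
    exact sum_congr rfl fun k _ => by field_simp
  have hT : ∑ k, M * I2 / h k = M * I2 * ∑ k, 1 / h k := by
    rw [mul_sum]
    exact sum_congr rfl fun k _ => by ring
  have hT0 : 0 ≤ ∑ k, 1 / h k := sum_nonneg fun k _ => (one_div_pos.2 (hh k)).le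
  rw [hS, hT, div_mul_eq_mul_div]
  gcongr
  exact sq_mul_add_mul_le (mul_nonneg hM hI2) hT0

/-- MSE bound for the Wolverton-Wagner estimator: for `f` in the Hölder class
`Σ(β,L)` and a kernel of order `ℓ = ⌊β⌋`, there is a constant `c > 0`
(depending only on `β`, `L` and the kernel, not on `n`, the bandwidths or `x`)
such that `E(|f̂_{n,h}(x) − f(x)|²) ≤ (c/n²)(|∑ h_k^β/ℓ!|² + ∑ 1/h_k)`. -/
theorem stmt_2
    (β L : ℝ) (hβ : 0 < β) (hL : 0 < L)
    (ℓ : ℕ) (hℓ : ℓ = ⌊β⌋₊)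
    (f : ℝ → ℝ) (hf_smooth : ContDiff ℝ ℓ f)
    (hf_holder : ∀ x y : ℝ,
      |iteratedDeriv ℓ f y - iteratedDeriv ℓ f x| ≤ L * |y - x| ^ (β - ℓ))
    (hf0 : ∀ y, 0 ≤ f y) (hfint : Integrable f) (hf1 : ∫ y, f y = 1)
    (hfbdd : ∃ M, ∀ y, f y ≤ M)
    (K : ℝ → ℝ) (hKint : Integrable K) (hK1 : ∫ z, K z = 1)
    (hK2 : MemLp K 2 volume)
    (hKmom_int : ∀ i : ℕ, i ≤ ℓ → Integrable (fun z => |z| ^ i * |K z|))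
    (hKmom : ∀ i : ℕ, 1 ≤ i → i ≤ ℓ → ∫ z, z ^ i * K z = 0)
    (hKβ : Integrable (fun z => |z| ^ β * |K z|)) :
    ∃ c > 0, ∀ (n : ℕ), 0 < n → ∀ (h : Fin n → ℝ), (∀ k, 0 < h k) →
      (∀ k l : Fin n, k < l → h l < h k) →
      ∀ (Ω : Type) (_ : MeasurableSpace Ω) (P : Measure Ω),
        IsProbabilityMeasure P →
        ∀ (X : Fin n → Ω → ℝ), (∀ k, Measurable (X k)) →
          iIndepFun X P →
          (∀ k, Measure.map (X k) P
            = volume.withDensity (fun y => ENNReal.ofReal (f y))) →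
          ∀ x : ℝ,
            (∫ ω, ((1 / (n : ℝ)) * ∑ k, (1 / h k) * K ((X k ω - x) / h k)
                - f x) ^ 2 ∂P)
              ≤ c / (n : ℝ) ^ 2
                  * ((∑ k, h k ^ β / (Nat.factorial ℓ : ℝ)) ^ 2
                      + ∑ k, 1 / h k) :=
  stmt_2_general β L hβ ℓ hℓ f hf_smooth hf_holder hf0 hfbdd K hK1 hK2 hKmom_int hKmom hKβ
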